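/- Let B ≤ C be L-algebras with B a substructure of C, and suppose B and C are universally equivalent (satisfy the same universal L-sentences). If a set T = S ∪ {¬(t₁=s₁),...,¬(tₘ=sₘ)} of quantifier-free formulas in finitely many variables is finitely satisfiable in C but not realized in C, then T is finitely satisfiable in B but not realized in B. -/

import Mathlib

/-!
For a finite `S₀ ⊆ S`, finite satisfiability of `T` in `C` says that `C` satisfies the
existential closure of the quantifier-free formula `⋀ S₀ ∧ ⋀ᵢ tᵢ ≠ sᵢ`. Its negation is a universal
sentence, so by universal equivalence `B` satisfies the existential closure too. Non-realization
passes down because a realization in the substructure `B` is one in `C`: the inclusion commutes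
with term evaluation and, being injective, preserves the disequations.
-/

open FirstOrder Language

namespace FirstOrder.Language

variable {L : Language}

namespace BoundedFormula

variable {α : Type*} {n : ℕ}

theorem isQF_foldr_inf {l : List (L.BoundedFormula α n)} (h : ∀ φ ∈ l, φ.IsQF) :
    (l.foldr (· ⊓ ·) ⊤).IsQF := by
  induction l with
  | nil => exact IsQF.top
  | cons φ l ih =>
    simp only [List.mem_cons, forall_eq_or_imp] at h
    exact h.1.inf (ih h.2)

theorem IsQF.iInf {β : Type*} [Finite β] {f : β → L.BoundedFormula α n}
    (h : ∀ b, (f b).IsQF) : (BoundedFormula.iInf f).IsQF :=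
  isQF_foldr_inf fun _ hφ => by
    obtain ⟨b, -, rfl⟩ := List.mem_map.1 hφ
    exact h b

theorem IsQF.exists_realize_of_alls_imp {M N : Type*} [L.Structure M] [L.Structure N]
    (hMN : ∀ (k : ℕ) (ψ : L.BoundedFormula Empty k), ψ.IsQF → M ⊨ ψ.alls → N ⊨ ψ.alls)
    {φ : L.BoundedFormula Empty n} (hφ : φ.IsQF) (hN : ∃ x : Fin n → N, φ.Realize default x) :
    ∃ x : Fin n → M, φ.Realize default x := by
  by_contra! hM
  obtain ⟨x, hx⟩ := hN
  have hNot : N ⊨ φ.not.alls := hMN n _ hφ.not (by simpa [Sentence.Realize] using hM)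
  simp only [Sentence.Realize, realize_alls, realize_not] at hNot
  exact hNot x hx

end BoundedFormula

variable {α : Type*} {m n : ℕ}

def IsSolution {M : Type*} [L.Structure M] (S : Set (L.Term α × L.Term α))
    (t s : Fin m → L.Term α) (x : α → M) : Prop :=
  (∀ p ∈ S, p.1.realize x = p.2.realize x) ∧ ∀ i, (t i).realize x ≠ (s i).realize x

theorem isSolution_comp_embedding {M N F : Type*} [L.Structure M] [L.Structure N]
    [FunLike F M N] [EmbeddingLike F M N] [L.HomClass F M N] (f : F)
    {S : Set (L.Term α × L.Term α)} {t s : Fin m → L.Term α} {x : α → M} :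
    IsSolution S t s (f ∘ x) ↔ IsSolution S t s x := by
  simp only [IsSolution, HomClass.realize_term, (EmbeddingLike.injective f).eq_iff, ne_eq]

noncomputable def systemFormula (S₀ : Finset (L.Term (Fin n) × L.Term (Fin n)))
    (t s : Fin m → L.Term (Fin n)) : L.BoundedFormula Empty n :=
  let eq (a b : L.Term (Fin n)) := (a.relabel Sum.inr).bdEqual (b.relabel Sum.inr)
  (BoundedFormula.iInf fun p : S₀ => eq p.1.1 p.1.2) ⊓
    BoundedFormula.iInf fun i => (eq (t i) (s i)).not

theorem isQF_systemFormula (S₀ : Finset (L.Term (Fin n) × L.Term (Fin n)))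
    (t s : Fin m → L.Term (Fin n)) : (systemFormula S₀ t s).IsQF :=
  (BoundedFormula.IsQF.iInf fun _ => (BoundedFormula.IsAtomic.equal _ _).isQF).inf
    (BoundedFormula.IsQF.iInf fun _ => (BoundedFormula.IsAtomic.equal _ _).isQF.not)

theorem realize_systemFormula {M : Type*} [L.Structure M]
    (S₀ : Finset (L.Term (Fin n) × L.Term (Fin n))) (t s : Fin m → L.Term (Fin n))
    (v : Empty → M) (x : Fin n → M) :
    (systemFormula S₀ t s).Realize v x ↔ IsSolution (↑S₀) t s x := by
  simp [systemFormula, IsSolution, BoundedFormula.realize_bdEqual, Term.realize_relabel]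

end FirstOrder.Language

/-- Let `B ≤ C` be universally equivalent `L`-algebras with `B` a substructure of `C`. If
`T = S ∪ {¬(t₁=s₁),...,¬(tₘ=sₘ)}` is finitely satisfiable in `C` but not realized in
`C`, then `T` is finitely satisfiable in `B` but not realized in `B`. -/
theorem stmt17 (L : FirstOrder.Language) (C : Type*) [L.Structure C]
    (B : L.Substructure C)
    (huniv : ∀ (k : ℕ) (ψ : L.BoundedFormula Empty k), ψ.IsQF →
      (((B : Type _) ⊨ ψ.alls) ↔ (C ⊨ ψ.alls)))
    {n m : ℕ} (S : Set (L.Term (Fin n) × L.Term (Fin n)))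
    (t s : Fin m → L.Term (Fin n))
    (hfsC : ∀ S₀ : Finset (L.Term (Fin n) × L.Term (Fin n)), ↑S₀ ⊆ S →
      ∃ x : Fin n → C, (∀ p ∈ S₀, p.1.realize x = p.2.realize x) ∧
        ∀ i, (t i).realize x ≠ (s i).realize x)
    (hnrC : ¬∃ x : Fin n → C, (∀ p ∈ S, p.1.realize x = p.2.realize x) ∧
      ∀ i, (t i).realize x ≠ (s i).realize x) :
    (∀ S₀ : Finset (L.Term (Fin n) × L.Term (Fin n)), ↑S₀ ⊆ S →
      ∃ x : Fin n → B, (∀ p ∈ S₀, p.1.realize x = p.2.realize x) ∧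
        ∀ i, (t i).realize x ≠ (s i).realize x) ∧
      ¬∃ x : Fin n → B, (∀ p ∈ S, p.1.realize x = p.2.realize x) ∧
        ∀ i, (t i).realize x ≠ (s i).realize x := by
  refine ⟨fun S₀ hS₀ => ?_, fun ⟨x, hx⟩ => hnrC ⟨B.subtype ∘ x, (isSolution_comp_embedding _).2 hx⟩⟩
  have hC : ∃ x : Fin n → C, (systemFormula S₀ t s).Realize default x :=
    (hfsC S₀ hS₀).imp fun x => (realize_systemFormula S₀ t s default x).2
  exact ((isQF_systemFormula S₀ t s).exists_realize_of_alls_imp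
    (fun k ψ hψ => (huniv k ψ hψ).1) hC).imp fun x => (realize_systemFormula S₀ t s default x).1
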